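/- arXiv:1409.5059 — 4 statements merged into one kernel-verified Lean document; each statement's English description precedes it below -/
import Mathlib

section
/- Let U0 = {0,1,2}, U1 = U2 = {0,1}, T = U0 × U1 × U2, and suppose R ⊆ T satisfies big(R) (for each coordinate i, the i-th-coordinate-omitting projections of R and of T \ R coincide). Then there exists a function f : U0 → Bool such that R = {(a,b,c) ∈ T : (b + c) mod 2 = (if f a then 0 else 1)}, and f is not constant. -/
def U0 : Set ℕ := {0, 1, 2}
def U1 : Set ℕ := {0, 1}
def U2 : Set ℕ := {0, 1}

/-- The rectangular hull `T = U0 × U1 × U2`. -/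
def Trect : Set (ℕ × ℕ × ℕ) := {p | p.1 ∈ U0 ∧ p.2.1 ∈ U1 ∧ p.2.2 ∈ U2}

/-- `big(R)`: for each coordinate `i`, the projection of `R` omitting coordinate `i`
equals the projection of `T \ R` omitting coordinate `i`. -/
def Big (R : Set (ℕ × ℕ × ℕ)) : Prop :=
  (∀ b c, (∃ a, (a, b, c) ∈ R) ↔ (∃ a, (a, b, c) ∈ Trect \ R)) ∧
  (∀ a c, (∃ b, (a, b, c) ∈ R) ↔ (∃ b, (a, b, c) ∈ Trect \ R)) ∧
  (∀ a b, (∃ c, (a, b, c) ∈ R) ↔ (∃ c, (a, b, c) ∈ Trect \ R))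

theorem stmt_4 (R : Set (ℕ × ℕ × ℕ)) (hR : R ⊆ Trect) (hbig : Big R) :
    ∃ f : ℕ → Bool,
      R = {p ∈ Trect | (p.2.1 + p.2.2) % 2 = (if f p.1 then 0 else 1)} ∧
      ∃ a ∈ U0, ∃ a' ∈ U0, f a ≠ f a' := by
  classical
  obtain ⟨h1, h2, h3⟩ := hbig
  have memU0 : ∀ x, x ∈ U0 ↔ x = 0 ∨ x = 1 ∨ x = 2 := by intro x; simp [U0]
  have memU1 : ∀ x, x ∈ U1 ↔ x = 0 ∨ x = 1 := by intro x; simp [U1]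
  have memU2 : ∀ x, x ∈ U2 ↔ x = 0 ∨ x = 1 := by intro x; simp [U2]
  -- structure of each fiber
  have key : ∀ a ∈ U0, ((a,0,1) ∈ R ↔ ¬ (a,0,0) ∈ R) ∧ ((a,1,0) ∈ R ↔ ¬ (a,0,0) ∈ R)
      ∧ ((a,1,1) ∈ R ↔ (a,0,0) ∈ R) := by
    intro a ha
    have eR2 : ∀ c, (∃ b, (a,b,c) ∈ R) ↔ ((a,0,c) ∈ R ∨ (a,1,c) ∈ R) := by
      intro c; constructor
      · rintro ⟨b, hb⟩
        rcases (memU1 b).1 (hR hb).2.1 with h | h <;> subst h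
        · exact Or.inl hb
        · exact Or.inr hb
      · rintro (h | h) <;> exact ⟨_, h⟩
    have eD2 : ∀ c, c ∈ U2 → ((∃ b, (a,b,c) ∈ Trect \ R) ↔ ((a,0,c) ∉ R ∨ (a,1,c) ∉ R)) := by
      intro c hc; constructor
      · rintro ⟨b, hb, hbR⟩
        rcases (memU1 b).1 hb.2.1 with h | h <;> subst h
        · exact Or.inl hbR
        · exact Or.inr hbR
      · rintro (h | h)
        · exact ⟨0, ⟨ha, by simp [U1], hc⟩, h⟩
        · exact ⟨1, ⟨ha, by simp [U1], hc⟩, h⟩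
    have eR3 : ∀ b, (∃ c, (a,b,c) ∈ R) ↔ ((a,b,0) ∈ R ∨ (a,b,1) ∈ R) := by
      intro b; constructor
      · rintro ⟨c, hc⟩
        rcases (memU2 c).1 (hR hc).2.2 with h | h <;> subst h
        · exact Or.inl hc
        · exact Or.inr hc
      · rintro (h | h) <;> exact ⟨_, h⟩
    have eD3 : ∀ b, b ∈ U1 → ((∃ c, (a,b,c) ∈ Trect \ R) ↔ ((a,b,0) ∉ R ∨ (a,b,1) ∉ R)) := by
      intro b hb; constructor
      · rintro ⟨c, hc, hcR⟩
        rcases (memU2 c).1 hc.2.2 with h | h <;> subst h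
        · exact Or.inl hcR
        · exact Or.inr hcR
      · rintro (h | h)
        · exact ⟨0, ⟨ha, hb, by simp [U2]⟩, h⟩
        · exact ⟨1, ⟨ha, hb, by simp [U2]⟩, h⟩
    have c0 := ((eR2 0).symm.trans ((h2 a 0).trans (eD2 0 (by simp [U2]))))
    have c1 := ((eR2 1).symm.trans ((h2 a 1).trans (eD2 1 (by simp [U2]))))
    have r0 := ((eR3 0).symm.trans ((h3 a 0).trans (eD3 0 (by simp [U1]))))
    have r1 := ((eR3 1).symm.trans ((h3 a 1).trans (eD3 1 (by simp [U1]))))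
    generalize hW : ((a,0,0) ∈ R) = W at c0 c1 r0 r1 ⊢
    generalize hX : ((a,0,1) ∈ R) = X at c0 c1 r0 r1 ⊢
    generalize hY : ((a,1,0) ∈ R) = Y at c0 c1 r0 r1 ⊢
    generalize hZ : ((a,1,1) ∈ R) = Z at c0 c1 r0 r1 ⊢
    clear hW hX hY hZ eR2 eD2 eR3 eD3 h1 h2 h3 hR memU0 memU1 memU2 ha
    tauto
  refine ⟨fun a => if (a,0,0) ∈ R then true else false, ?_, ?_⟩
  · ext ⟨a, b, c⟩
    simp only [Set.mem_setOf_eq, Trect]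
    constructor
    · intro h
      have hT := hR h
      refine ⟨hT, ?_⟩
      obtain ⟨ha, hb, hc⟩ := hT
      obtain ⟨k1, k2, k3⟩ := key a ha
      by_cases hw : (a,0,0) ∈ R
      · rcases (memU1 b).1 hb with rfl | rfl <;> rcases (memU2 c).1 hc with rfl | rfl
        · simp only [hw]; norm_num
        · exact absurd hw (k1.1 h)
        · exact absurd hw (k2.1 h)
        · simp only [hw]; norm_num
      · rcases (memU1 b).1 hb with rfl | rfl <;> rcases (memU2 c).1 hc with rfl | rfl
        · exact absurd h hw
        · simp only [hw]; norm_num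
        · simp only [hw]; norm_num
        · exact absurd (k3.1 h) hw
    · rintro ⟨⟨ha, hb, hc⟩, hp⟩
      obtain ⟨k1, k2, k3⟩ := key a ha
      by_cases hw : (a,0,0) ∈ R
      · rcases (memU1 b).1 hb with rfl | rfl <;> rcases (memU2 c).1 hc with rfl | rfl
        · exact hw
        · simp only [hw] at hp; norm_num at hp
        · simp only [hw] at hp; norm_num at hp
        · exact k3.2 hw
      · rcases (memU1 b).1 hb with rfl | rfl <;> rcases (memU2 c).1 hc with rfl | rfl
        · simp only [hw] at hp; norm_num at hp
        · exact k1.2 hw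
        · exact k2.2 hw
        · simp only [hw] at hp; norm_num at hp
  · have e1 := h1 0 0
    by_cases hw : (0,0,0) ∈ R
    · obtain ⟨a, ha, haR⟩ := e1.1 ⟨0, hw⟩
      exact ⟨0, by simp [U0], a, ha.1, by simp only [hw, haR]; norm_num⟩
    · obtain ⟨a, haR⟩ := e1.2 ⟨0, ⟨by simp [U0], by simp [U1], by simp [U2]⟩, hw⟩
      exact ⟨0, by simp [U0], a, (hR haR).1, by simp only [hw, haR]; norm_num⟩
end

section
/- Let U0 = {0,1,2}, U1 = U2 = {0,1}, T = U0 × U1 × U2. Define R0 = {(a,b,c) ∈ T : (a = 0 ∧ b + c even) ∨ (a ≠ 0 ∧ b + c odd)}. Suppose R ⊆ T satisfies big(R). Then there exists a bijection σ : U0 → U0 and bijections τ1 : U1 → U1, τ2 : U2 → U2 such that (a,b,c) ∈ R iff (σ a, τ1 b, τ2 c) ∈ R0. -/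
/-- The canonical parity relation `R0` on `T`. -/
def R0 : Set (ℕ × ℕ × ℕ) :=
  {p ∈ Trect | (p.1 = 0 ∧ Even (p.2.1 + p.2.2)) ∨ (p.1 ≠ 0 ∧ Odd (p.2.1 + p.2.2))}

def r0b (a : Fin 3) (b c : Fin 2) : Bool :=
  if a = 0 then b = c else b ≠ c

lemma memU0 {n : ℕ} : n ∈ U0 ↔ n < 3 := by simp [U0]; omega
lemma memU1 {n : ℕ} : n ∈ U1 ↔ n < 2 := by simp [U1]; omega
lemma memU2 {n : ℕ} : n ∈ U2 ↔ n < 2 := by simp [U2]; omega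

lemma pattern2 (h : Fin 2 → Fin 2 → Bool)
    (hb : ∀ c, (∃ b, h b c = true) ∧ (∃ b, h b c = false))
    (hc : ∀ b, (∃ c, h b c = true) ∧ (∃ c, h b c = false)) :
    (∀ b c, h b c = decide (b = c)) ∨ (∀ b c, h b c = decide (b ≠ c)) := by
  revert hb hc; revert h; decide

lemma r0link : ∀ (a : Fin 3) (b c : Fin 2), ((a.1, b.1, c.1) ∈ R0) ↔ r0b a b c = true := by
  intro a b c
  fin_cases a <;> fin_cases b <;> fin_cases c <;>
    simp [R0, Trect, U0, U1, U2, r0b, Set.mem_setOf_eq] <;> decide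


lemma swap2 : ∀ b c : Fin 2, decide ((Equiv.swap (0:Fin 2) 1) b = c) = decide (b ≠ c) := by decide
lemma swap2' : ∀ b c : Fin 2, decide ((Equiv.swap (0:Fin 2) 1) b ≠ c) = decide (b = c) := by decide

lemma core (g : Fin 3 → Fin 2 → Fin 2 → Bool)
    (h1 : ∀ b c, (∃ a, g a b c = true) ∧ (∃ a, g a b c = false))
    (h2 : ∀ a c, (∃ b, g a b c = true) ∧ (∃ b, g a b c = false))
    (h3 : ∀ a b, (∃ c, g a b c = true) ∧ (∃ c, g a b c = false)) :
    ∃ σ : Equiv.Perm (Fin 3), ∃ τ1 τ2 : Equiv.Perm (Fin 2),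
      ∀ a b c, g a b c = r0b (σ a) (τ1 b) (τ2 c) := by
  have hEN : ∀ a, (∀ b c, g a b c = decide (b = c)) ∨ (∀ b c, g a b c = decide (b ≠ c)) :=
    fun a => pattern2 (g a) (fun c => h2 a c) (fun b => h3 a b)
  have key : ∀ (a0 : Fin 3),
      ( ((∀ b c, g a0 b c = decide (b = c)) ∧ (∀ a, a ≠ a0 → ∀ b c, g a b c = decide (b ≠ c)))
      ∨ ((∀ b c, g a0 b c = decide (b ≠ c)) ∧ (∀ a, a ≠ a0 → ∀ b c, g a b c = decide (b = c)))) →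
      ∃ σ : Equiv.Perm (Fin 3), ∃ τ1 τ2 : Equiv.Perm (Fin 2),
        ∀ a b c, g a b c = r0b (σ a) (τ1 b) (τ2 c) := by
    rintro a0 (⟨hE, hN⟩ | ⟨hE, hN⟩)
    · refine ⟨Equiv.swap 0 a0, 1, 1, ?_⟩
      intro a b c
      by_cases ha : a = a0
      · subst ha
        rw [hE, show Equiv.swap (0:Fin 3) a a = 0 from Equiv.swap_apply_right 0 a]
        rfl
      · have hne : Equiv.swap (0:Fin 3) a0 a ≠ 0 := by
          intro h
          exact ha ((Equiv.swap 0 a0).injective (h.trans (Equiv.swap_apply_right 0 a0).symm))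
        rw [hN a ha, r0b, if_neg hne]
        rfl
    · refine ⟨Equiv.swap 0 a0, Equiv.swap 0 1, 1, ?_⟩
      intro a b c
      by_cases ha : a = a0
      · subst ha
        rw [hE, show Equiv.swap (0:Fin 3) a a = 0 from Equiv.swap_apply_right 0 a, r0b, if_pos rfl]
        exact (swap2 b c).symm
      · have hne : Equiv.swap (0:Fin 3) a0 a ≠ 0 := by
          intro h
          exact ha ((Equiv.swap 0 a0).injective (h.trans (Equiv.swap_apply_right 0 a0).symm))
        rw [hN a ha, r0b, if_neg hne]
        exact (swap2' b c).symm
  have ne3 : ∀ a : Fin 3, (a ≠ 0 → a = 1 ∨ a = 2) ∧ (a ≠ 1 → a = 0 ∨ a = 2) ∧ (a ≠ 2 → a = 0 ∨ a = 1) := by decide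
  rcases hEN 0 with p0 | p0 <;> rcases hEN 1 with p1 | p1 <;> rcases hEN 2 with p2 | p2
  · exfalso
    obtain ⟨a, ha⟩ := (h1 0 0).2
    have : a = 0 ∨ a = 1 ∨ a = 2 := by omega
    rcases this with h | h | h <;> subst h <;>
      [rw [p0] at ha; rw [p1] at ha; rw [p2] at ha] <;> exact absurd ha (by decide)
  · exact key 2 (Or.inr ⟨p2, fun a ha b c => by rcases (ne3 a).2.2 ha with h | h <;> subst h <;> [exact p0 b c; exact p1 b c]⟩)
  · exact key 1 (Or.inr ⟨p1, fun a ha b c => by rcases (ne3 a).2.1 ha with h | h <;> subst h <;> [exact p0 b c; exact p2 b c]⟩)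
  · exact key 0 (Or.inl ⟨p0, fun a ha b c => by rcases (ne3 a).1 ha with h | h <;> subst h <;> [exact p1 b c; exact p2 b c]⟩)
  · exact key 0 (Or.inr ⟨p0, fun a ha b c => by rcases (ne3 a).1 ha with h | h <;> subst h <;> [exact p1 b c; exact p2 b c]⟩)
  · exact key 1 (Or.inl ⟨p1, fun a ha b c => by rcases (ne3 a).2.1 ha with h | h <;> subst h <;> [exact p0 b c; exact p2 b c]⟩)
  · exact key 2 (Or.inl ⟨p2, fun a ha b c => by rcases (ne3 a).2.2 ha with h | h <;> subst h <;> [exact p0 b c; exact p1 b c]⟩)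
  · exfalso
    obtain ⟨a, ha⟩ := (h1 0 1).2
    have : a = 0 ∨ a = 1 ∨ a = 2 := by omega
    rcases this with h | h | h <;> subst h <;>
      [rw [p0] at ha; rw [p1] at ha; rw [p2] at ha] <;> exact absurd ha (by decide)

lemma bijon_of_perm {k : ℕ} (e : Equiv.Perm (Fin k)) :
    Set.BijOn (fun n => if h : n < k then ((e ⟨n, h⟩ : Fin k) : ℕ) else n)
      {n | n < k} {n | n < k} := by
  refine ⟨?_, ?_, ?_⟩
  · intro n hn
    simp only [Set.mem_setOf_eq] at hn ⊢
    rw [dif_pos hn]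
    exact (e ⟨n, hn⟩).isLt
  · intro x hx y hy hxy
    simp only [Set.mem_setOf_eq] at hx hy
    simp only [dif_pos hx, dif_pos hy] at hxy
    exact congrArg Fin.val (e.injective (Fin.ext hxy))
  · intro m hm
    simp only [Set.mem_setOf_eq] at hm
    refine ⟨(e.symm ⟨m, hm⟩ : Fin k), (e.symm ⟨m, hm⟩).isLt, ?_⟩
    simp only [dif_pos (e.symm ⟨m, hm⟩).isLt, Fin.eta, Equiv.apply_symm_apply]

theorem stmt_5 (R : Set (ℕ × ℕ × ℕ)) (hR : R ⊆ Trect) (hbig : Big R) :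
    ∃ σ τ1 τ2 : ℕ → ℕ,
      Set.BijOn σ U0 U0 ∧ Set.BijOn τ1 U1 U1 ∧ Set.BijOn τ2 U2 U2 ∧
      ∀ a ∈ U0, ∀ b ∈ U1, ∀ c ∈ U2, ((a, b, c) ∈ R ↔ (σ a, τ1 b, τ2 c) ∈ R0) := by
  classical
  obtain ⟨hb1, hb2, hb3⟩ := hbig
  set g : Fin 3 → Fin 2 → Fin 2 → Bool := fun a b c => decide ((a.1, b.1, c.1) ∈ R) with hg
  have gt : ∀ (a : Fin 3) (b c : Fin 2), g a b c = true ↔ (a.1, b.1, c.1) ∈ R := by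
    intro a b c; simp [hg]
  have gf : ∀ (a : Fin 3) (b c : Fin 2), g a b c = false ↔ (a.1, b.1, c.1) ∉ R := by
    intro a b c; simp [hg]
  have memT : ∀ (a : Fin 3) (b c : Fin 2), ((a.1 : ℕ), b.1, c.1) ∈ Trect := by
    intro a b c
    exact ⟨memU0.2 a.isLt, memU1.2 b.isLt, memU2.2 c.isLt⟩
  -- translate Big to the boolean setting
  have both : ∀ (x : ℕ × ℕ × ℕ), x ∈ Trect →
      (∃ y, y ∈ R) → True := fun _ _ _ => trivial
  have h1 : ∀ b c : Fin 2, (∃ a, g a b c = true) ∧ (∃ a, g a b c = false) := by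
    intro b c
    have key : (∃ a, (a, b.1, c.1) ∈ R) ∧ (∃ a, (a, b.1, c.1) ∈ Trect \ R) := by
      by_cases hx : ((0 : ℕ), b.1, c.1) ∈ R
      · exact ⟨⟨0, hx⟩, (hb1 b.1 c.1).1 ⟨0, hx⟩⟩
      · have hm : ((0 : ℕ), b.1, c.1) ∈ Trect \ R := ⟨memT 0 b c, hx⟩
        exact ⟨(hb1 b.1 c.1).2 ⟨0, hm⟩, ⟨0, hm⟩⟩
    obtain ⟨⟨a1, ha1⟩, ⟨a2, ha2⟩⟩ := key
    have l1 : a1 < 3 := memU0.1 (hR ha1).1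
    have l2 : a2 < 3 := memU0.1 ha2.1.1
    exact ⟨⟨⟨a1, l1⟩, (gt _ b c).2 ha1⟩, ⟨⟨a2, l2⟩, (gf _ b c).2 ha2.2⟩⟩
  have h2 : ∀ (a : Fin 3) (c : Fin 2), (∃ b, g a b c = true) ∧ (∃ b, g a b c = false) := by
    intro a c
    have key : (∃ b, (a.1, b, c.1) ∈ R) ∧ (∃ b, (a.1, b, c.1) ∈ Trect \ R) := by
      by_cases hx : (a.1, (0 : ℕ), c.1) ∈ R
      · exact ⟨⟨0, hx⟩, (hb2 a.1 c.1).1 ⟨0, hx⟩⟩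
      · have hm : (a.1, (0 : ℕ), c.1) ∈ Trect \ R := ⟨memT a 0 c, hx⟩
        exact ⟨(hb2 a.1 c.1).2 ⟨0, hm⟩, ⟨0, hm⟩⟩
    obtain ⟨⟨b1, hb1'⟩, ⟨b2, hb2'⟩⟩ := key
    have l1 : b1 < 2 := memU1.1 (hR hb1').2.1
    have l2 : b2 < 2 := memU1.1 hb2'.1.2.1
    exact ⟨⟨⟨b1, l1⟩, (gt a _ c).2 hb1'⟩, ⟨⟨b2, l2⟩, (gf a _ c).2 hb2'.2⟩⟩
  have h3 : ∀ (a : Fin 3) (b : Fin 2), (∃ c, g a b c = true) ∧ (∃ c, g a b c = false) := by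
    intro a b
    have key : (∃ c, (a.1, b.1, c) ∈ R) ∧ (∃ c, (a.1, b.1, c) ∈ Trect \ R) := by
      by_cases hx : (a.1, b.1, (0 : ℕ)) ∈ R
      · exact ⟨⟨0, hx⟩, (hb3 a.1 b.1).1 ⟨0, hx⟩⟩
      · have hm : (a.1, b.1, (0 : ℕ)) ∈ Trect \ R := ⟨memT a b 0, hx⟩
        exact ⟨(hb3 a.1 b.1).2 ⟨0, hm⟩, ⟨0, hm⟩⟩
    obtain ⟨⟨c1, hc1⟩, ⟨c2, hc2⟩⟩ := key
    have l1 : c1 < 2 := memU2.1 (hR hc1).2.2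
    have l2 : c2 < 2 := memU2.1 hc2.1.2.2
    exact ⟨⟨⟨c1, l1⟩, (gt a b _).2 hc1⟩, ⟨⟨c2, l2⟩, (gf a b _).2 hc2.2⟩⟩
  obtain ⟨σ', τ1', τ2', hiso⟩ := core g h1 h2 h3
  refine ⟨fun n => if h : n < 3 then ((σ' ⟨n, h⟩ : Fin 3) : ℕ) else n,
          fun n => if h : n < 2 then ((τ1' ⟨n, h⟩ : Fin 2) : ℕ) else n,
          fun n => if h : n < 2 then ((τ2' ⟨n, h⟩ : Fin 2) : ℕ) else n,
          ?_, ?_, ?_, ?_⟩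
  · have : U0 = {n | n < 3} := Set.ext fun _ => memU0
    rw [this]; exact bijon_of_perm σ'
  · have : U1 = {n | n < 2} := Set.ext fun _ => memU1
    rw [this]; exact bijon_of_perm τ1'
  · have : U2 = {n | n < 2} := Set.ext fun _ => memU2
    rw [this]; exact bijon_of_perm τ2'
  · intro a ha b hb c hc
    have la : a < 3 := memU0.1 ha
    have lb : b < 2 := memU1.1 hb
    have lc : c < 2 := memU2.1 hc
    simp only [dif_pos la, dif_pos lb, dif_pos lc]
    rw [← gt ⟨a, la⟩ ⟨b, lb⟩ ⟨c, lc⟩, hiso, ← r0link]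
end

section
/- Let U0 = {0,1,2}, U1 = U2 = {0,1}, T = U0 × U1 × U2, and suppose R ⊆ T satisfies big(R). Fix b0 ∈ U1, c ∈ U2, and let X = {a ∈ U0 : (a,b0,c) ∈ R} and d the element of U2 other than c. Then {a ∈ U0 : (a,b0,d) ∈ R} = U0 \ X. -/
theorem stmt_17 (R : Set (ℕ × ℕ × ℕ)) (hR : R ⊆ Trect) (hbig : Big R)
    (b0 : ℕ) (hb0 : b0 ∈ U1) (c d : ℕ) (hc : c ∈ U2) (hd : d ∈ U2) (hcd : d ≠ c) :
    {a ∈ U0 | (a, b0, d) ∈ R} = U0 \ {a ∈ U0 | (a, b0, c) ∈ R} := by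
  have key : ∀ a ∈ U0, ((a, b0, d) ∈ R ↔ (a, b0, c) ∉ R) := by
    intro a ha
    have h := hbig.2.2 a b0
    have hfull : ∀ e ∈ U2, (a, b0, e) ∈ Trect := by
      intro e he; exact ⟨ha, hb0, he⟩
    constructor
    · intro hdR hcR
      have : ∃ e, (a, b0, e) ∈ Trect \ R := h.mp ⟨d, hdR⟩
      obtain ⟨e, heT, heR⟩ := this
      have heU : e ∈ U2 := heT.2.2
      -- e must be c or d since U2 = {0,1} and {c,d} = {0,1}
      rcases hc with rfl | rfl <;> rcases hd with rfl | rfl <;>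
        simp_all [U2, Set.mem_insert_iff] <;> rcases heU with rfl | rfl <;> simp_all
    · intro hcR
      by_contra hdR
      have hne : ¬ ∃ e, (a, b0, e) ∈ R := by
        rintro ⟨e, heR⟩
        have heU2 : e ∈ U2 := (hR heR).2.2
        rcases hc with rfl | rfl <;> rcases hd with rfl | rfl <;>
          simp_all [U2, Set.mem_insert_iff] <;> rcases heU2 with rfl | rfl <;> simp_all
      exact hne (h.mpr ⟨c, hfull c hc, hcR⟩)
  ext a
  simp only [Set.mem_setOf_eq, Set.mem_diff, Set.mem_sep_iff]
  constructor
  · rintro ⟨ha, hr⟩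
    exact ⟨ha, fun h2 => (key a ha).mp hr h2.2⟩
  · rintro ⟨ha, hr⟩
    exact ⟨ha, (key a ha).mpr fun hc' => hr ⟨ha, hc'⟩⟩
end

section
/- Let U0 = {0,1,2}, U1 = U2 = {0,1}, T = U0 × U1 × U2, and suppose R ⊆ T satisfies big(R). Then there is exactly one subset D ⊆ U0 with |D| = 1 such that: for all (a,b,c), (a',b',c') ∈ T with a, a' ∉ D, membership (a,b,c) ∈ R and (a',b',c') ∈ R are equivalent whenever b + c ≡ b' + c' (mod 2), and moreover R restricted to (U0 \ D) × U1 × U2 is either {(a,b,c) : b+c even} or {(a,b,c) : b+c odd} on that set, with the opposite parity on D × U1 × U2. -/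
lemma main_case (R : Set (ℕ × ℕ × ℕ))
    (hfib : ∀ a ∈ U0, ∀ b ∈ U1, ∀ c ∈ U2,
      ((a, b, c) ∈ R ↔ ((b + c) % 2 = 0 ↔ (a, 0, 0) ∈ R)))
    (a0 a1 a2 : ℕ) (h01 : a0 ≠ a1) (h02 : a0 ≠ a2) (h12 : a1 ≠ a2)
    (m0 : a0 ∈ U0) (m1 : a1 ∈ U0) (m2 : a2 ∈ U0)
    (hcover : ∀ x ∈ U0, x = a0 ∨ x = a1 ∨ x = a2)
    (heq : ((a1, 0, 0) ∈ R ↔ (a2, 0, 0) ∈ R))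
    (hne : ¬((a0, 0, 0) ∈ R ↔ (a1, 0, 0) ∈ R)) :
    ∃! D : Set ℕ,
      D ⊆ U0 ∧ D.ncard = 1 ∧
      (∀ a ∈ U0 \ D, ∀ a' ∈ U0 \ D, ∀ b ∈ U1, ∀ b' ∈ U1, ∀ c ∈ U2, ∀ c' ∈ U2,
        (b + c) % 2 = (b' + c') % 2 → ((a, b, c) ∈ R ↔ (a', b', c') ∈ R)) ∧
      (∃ p : Bool,
        (∀ a ∈ U0 \ D, ∀ b ∈ U1, ∀ c ∈ U2,
          ((a, b, c) ∈ R ↔ (b + c) % 2 = (if p then 0 else 1))) ∧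
        (∀ a ∈ D, ∀ b ∈ U1, ∀ c ∈ U2,
          ((a, b, c) ∈ R ↔ (b + c) % 2 = (if p then 1 else 0)))) := by
  have h0U1 : (0 : ℕ) ∈ U1 := by simp [U1]
  have h0U2 : (0 : ℕ) ∈ U2 := by simp [U2]
  refine ⟨{a0}, ⟨?_, ?_, ?_, ?_⟩, ?_⟩
  · simpa using m0
  · simp
  · -- uniformity outside {a0}
    intro a ha a' ha' b hb b' hb' c hc c' hc' hpar
    have haU := ha.1
    have haa0 : a ≠ a0 := by simpa using ha.2
    have ha'U := ha'.1
    have ha'a0 : a' ≠ a0 := by simpa using ha'.2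
    have hta : ((a, 0, 0) ∈ R ↔ (a1, 0, 0) ∈ R) := by
      rcases hcover a haU with h | h | h
      · exact absurd h haa0
      · rw [h]
      · rw [h]; exact heq.symm
    have hta' : ((a', 0, 0) ∈ R ↔ (a1, 0, 0) ∈ R) := by
      rcases hcover a' ha'U with h | h | h
      · exact absurd h ha'a0
      · rw [h]
      · rw [h]; exact heq.symm
    rw [hfib a haU b hb c hc, hfib a' ha'U b' hb' c' hc', hpar, hta, hta']
  · -- the parity witness
    have h10 : (1 : ℕ) ≠ 0 := one_ne_zero
    by_cases h1 : (a1, 0, 0) ∈ R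
    · refine ⟨true, ?_, ?_⟩
      · intro a ha b hb c hc
        have haU := ha.1
        have haa0 : a ≠ a0 := by simpa using ha.2
        have hta : (a, 0, 0) ∈ R := by
          rcases hcover a haU with h | h | h
          · exact absurd h haa0
          · rw [h]; exact h1
          · rw [h]; exact heq.mp h1
        rw [hfib a haU b hb c hc, if_pos rfl]
        rcases Nat.mod_two_eq_zero_or_one (b + c) with h | h <;> rw [h] <;> tauto
      · intro a ha b hb c hc
        have haa0 : a = a0 := by simpa using ha
        subst haa0
        have hta : (a, 0, 0) ∉ R := fun h => hne (by tauto)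
        rw [hfib a m0 b hb c hc, if_pos rfl]
        rcases Nat.mod_two_eq_zero_or_one (b + c) with h | h <;> rw [h] <;> tauto
    · refine ⟨false, ?_, ?_⟩
      · intro a ha b hb c hc
        have haU := ha.1
        have haa0 : a ≠ a0 := by simpa using ha.2
        have hta : (a, 0, 0) ∉ R := by
          rcases hcover a haU with h | h | h
          · exact absurd h haa0
          · rw [h]; exact h1
          · rw [h]; exact fun hh => h1 (heq.mpr hh)
        rw [hfib a haU b hb c hc, if_neg (by simp)]
        rcases Nat.mod_two_eq_zero_or_one (b + c) with h | h <;> rw [h] <;> tauto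
      · intro a ha b hb c hc
        have haa0 : a = a0 := by simpa using ha
        subst haa0
        have hta : (a, 0, 0) ∈ R := by
          by_contra h; exact hne (by tauto)
        rw [hfib a m0 b hb c hc, if_neg (by simp)]
        rcases Nat.mod_two_eq_zero_or_one (b + c) with h | h <;> rw [h] <;> tauto
  · -- uniqueness
    rintro D ⟨hsub, hcard, huni, -⟩
    obtain ⟨d, rfl⟩ := Set.ncard_eq_one.mp hcard
    have hdU : d ∈ U0 := hsub rfl
    have key : ∀ x y : ℕ, x ∈ U0 → y ∈ U0 → x ≠ d → y ≠ d →
        ((x, 0, 0) ∈ R ↔ (y, 0, 0) ∈ R) := by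
      intro x y hx hy hxd hyd
      exact huni x ⟨hx, by simpa using hxd⟩ y ⟨hy, by simpa using hyd⟩
        0 h0U1 0 h0U1 0 h0U2 0 h0U2 rfl
    rcases hcover d hdU with h | h | h
    · rw [h]
    · exfalso
      subst h
      exact hne ((key a0 a2 m0 m2 h01 (Ne.symm h12)).trans heq.symm)
    · exfalso
      subst h
      exact hne (key a0 a1 m0 m1 h02 h12)

theorem stmt_19 (R : Set (ℕ × ℕ × ℕ)) (hR : R ⊆ Trect) (hbig : Big R) :
    ∃! D : Set ℕ,
      D ⊆ U0 ∧ D.ncard = 1 ∧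
      (∀ a ∈ U0 \ D, ∀ a' ∈ U0 \ D, ∀ b ∈ U1, ∀ b' ∈ U1, ∀ c ∈ U2, ∀ c' ∈ U2,
        (b + c) % 2 = (b' + c') % 2 → ((a, b, c) ∈ R ↔ (a', b', c') ∈ R)) ∧
      (∃ p : Bool,
        (∀ a ∈ U0 \ D, ∀ b ∈ U1, ∀ c ∈ U2,
          ((a, b, c) ∈ R ↔ (b + c) % 2 = (if p then 0 else 1))) ∧
        (∀ a ∈ D, ∀ b ∈ U1, ∀ c ∈ U2,
          ((a, b, c) ∈ R ↔ (b + c) % 2 = (if p then 1 else 0)))) := by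
  -- basic membership facts
  have h0U1 : (0 : ℕ) ∈ U1 := by simp [U1]
  have h1U1 : (1 : ℕ) ∈ U1 := by simp [U1]
  have h0U2 : (0 : ℕ) ∈ U2 := by simp [U2]
  have h1U2 : (1 : ℕ) ∈ U2 := by simp [U2]
  -- b-flip: exactly one of b = 0, 1 in R
  have bflip : ∀ a ∈ U0, ∀ c ∈ U2, ((a, 0, c) ∈ R ↔ ¬ (a, 1, c) ∈ R) := by
    intro a haU c hcU
    have H := hbig.2.1 a c
    constructor
    · intro h0 h1
      obtain ⟨b, hbT, hbR⟩ := H.mp ⟨0, h0⟩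
      have hbU : b ∈ U1 := hbT.2.1
      have : b = 0 ∨ b = 1 := by simpa [U1] using hbU
      rcases this with rfl | rfl
      · exact hbR h0
      · exact hbR h1
    · intro h1
      by_contra h0
      obtain ⟨b, hbR⟩ := H.mpr ⟨0, ⟨haU, h0U1, hcU⟩, h0⟩
      have hbU : b ∈ U1 := (hR hbR).2.1
      have : b = 0 ∨ b = 1 := by simpa [U1] using hbU
      rcases this with rfl | rfl
      · exact h0 hbR
      · exact h1 hbR
  -- c-flip
  have cflip : ∀ a ∈ U0, ∀ b ∈ U1, ((a, b, 0) ∈ R ↔ ¬ (a, b, 1) ∈ R) := by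
    intro a haU b hbU
    have H := hbig.2.2 a b
    constructor
    · intro h0 h1
      obtain ⟨c, hcT, hcR⟩ := H.mp ⟨0, h0⟩
      have hcU : c ∈ U2 := hcT.2.2
      have : c = 0 ∨ c = 1 := by simpa [U2] using hcU
      rcases this with rfl | rfl
      · exact hcR h0
      · exact hcR h1
    · intro h1
      by_contra h0
      obtain ⟨c, hcR⟩ := H.mpr ⟨0, ⟨haU, hbU, h0U2⟩, h0⟩
      have hcU : c ∈ U2 := (hR hcR).2.2
      have : c = 0 ∨ c = 1 := by simpa [U2] using hcU
      rcases this with rfl | rfl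
      · exact h0 hcR
      · exact h1 hcR
  -- each slice is a parity class
  have hfib : ∀ a ∈ U0, ∀ b ∈ U1, ∀ c ∈ U2,
      ((a, b, c) ∈ R ↔ ((b + c) % 2 = 0 ↔ (a, 0, 0) ∈ R)) := by
    intro a haU b hbU c hcU
    have hb : b = 0 ∨ b = 1 := by simpa [U1] using hbU
    have hc : c = 0 ∨ c = 1 := by simpa [U2] using hcU
    have e01 : ((a, 0, 1) ∈ R ↔ ¬ (a, 0, 0) ∈ R) := by
      have := cflip a haU 0 h0U1; tauto
    have e10 : ((a, 1, 0) ∈ R ↔ ¬ (a, 0, 0) ∈ R) := by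
      have := bflip a haU 0 h0U2; tauto
    have e11 : ((a, 1, 1) ∈ R ↔ (a, 0, 0) ∈ R) := by
      have h1 := bflip a haU 1 h1U2
      have := not_not (a := (a, 0, 0) ∈ R)
      tauto
    rcases hb with rfl | rfl <;> rcases hc with rfl | rfl
    · simp
    · rw [e01]; norm_num
    · rw [e10]; norm_num
    · rw [e11]; norm_num
  -- the a-direction condition at (0,0): types are not constant
  have Ha := hbig.1 0 0
  have hnotall : ¬ ((0, 0, 0) ∈ R ∧ (1, 0, 0) ∈ R ∧ (2, 0, 0) ∈ R) := by
    rintro ⟨t0, t1, t2⟩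
    obtain ⟨a, haT, haR⟩ := Ha.mp ⟨0, t0⟩
    have haU : a ∈ U0 := haT.1
    have : a = 0 ∨ a = 1 ∨ a = 2 := by simpa [U0] using haU
    rcases this with rfl | rfl | rfl
    · exact haR t0
    · exact haR t1
    · exact haR t2
  have hsome : (0, 0, 0) ∈ R ∨ (1, 0, 0) ∈ R ∨ (2, 0, 0) ∈ R := by
    by_contra h
    push_neg at h
    obtain ⟨a, haR⟩ := Ha.mpr ⟨0, ⟨by simp [U0], h0U1, h0U2⟩, h.1⟩
    have haU : a ∈ U0 := (hR haR).1
    have : a = 0 ∨ a = 1 ∨ a = 2 := by simpa [U0] using haU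
    rcases this with rfl | rfl | rfl
    · exact h.1 haR
    · exact h.2.1 haR
    · exact h.2.2 haR
  have m0 : (0 : ℕ) ∈ U0 := by simp [U0]
  have m1 : (1 : ℕ) ∈ U0 := by simp [U0]
  have m2 : (2 : ℕ) ∈ U0 := by simp [U0]
  have hcover : ∀ x ∈ U0, True := fun _ _ => trivial
  by_cases t0 : (0, 0, 0) ∈ R <;> by_cases t1 : (1, 0, 0) ∈ R <;>
    by_cases t2 : (2, 0, 0) ∈ R
  · exact absurd ⟨t0, t1, t2⟩ hnotall
  · exact main_case R hfib 2 0 1 (by norm_num) (by norm_num) (by norm_num)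
      m2 m0 m1 (fun x hx => by simp [U0] at hx; omega)
      (by tauto) (by tauto)
  · exact main_case R hfib 1 0 2 (by norm_num) (by norm_num) (by norm_num)
      m1 m0 m2 (fun x hx => by simp [U0] at hx; omega)
      (by tauto) (by tauto)
  · exact main_case R hfib 0 1 2 (by norm_num) (by norm_num) (by norm_num)
      m0 m1 m2 (fun x hx => by simp [U0] at hx; omega)
      (by tauto) (by tauto)
  · exact main_case R hfib 0 1 2 (by norm_num) (by norm_num) (by norm_num)
      m0 m1 m2 (fun x hx => by simp [U0] at hx; omega)
      (by tauto) (by tauto)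
  · exact main_case R hfib 1 0 2 (by norm_num) (by norm_num) (by norm_num)
      m1 m0 m2 (fun x hx => by simp [U0] at hx; omega)
      (by tauto) (by tauto)
  · exact main_case R hfib 2 0 1 (by norm_num) (by norm_num) (by norm_num)
      m2 m0 m1 (fun x hx => by simp [U0] at hx; omega)
      (by tauto) (by tauto)
  · exact absurd hsome (by tauto)
end
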